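/- Let (ℱ_{i,j})_{i,j≥0} be a two-parameter filtration satisfying the (F4) condition, and let C ∈ L¹(ℱ_{∞,∞}). Then 𝔼[ Σ_i sup_j |𝔼_{∞,j}(Δ^{(1)}_i C)| ] ≥ 𝔼[ sup_{i,j} |𝔼_{i,j} C| ], where Δ^{(1)}_i = 𝔼_{i,∞} − 𝔼_{i−1,∞} for i ≥ 1 and Δ^{(1)}_0 = 𝔼_{0,∞}. -/

import Mathlib

open MeasureTheory ENNReal

/-- The σ-algebra `ℱ_{i,∞} = ⋁_j ℱ_{i,j}`. -/
def rowSup {Ω : Type*} (𝓕 : ℕ → ℕ → MeasurableSpace Ω) (i : ℕ) : MeasurableSpace Ω :=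
  ⨆ j, 𝓕 i j

/-- The σ-algebra `ℱ_{∞,j} = ⋁_i ℱ_{i,j}`. -/
def colSup {Ω : Type*} (𝓕 : ℕ → ℕ → MeasurableSpace Ω) (j : ℕ) : MeasurableSpace Ω :=
  ⨆ i, 𝓕 i j

/-- A two-parameter filtration satisfying the (F4) condition:
`𝔼_{i,j} 𝔼_{k,l} = 𝔼_{min(i,k),min(j,l)} = 𝔼_{k,l} 𝔼_{i,j}` as operators on `L¹`. -/
structure IsF4Filtration {Ω : Type*} [m0 : MeasurableSpace Ω] (μ : Measure Ω)
    (𝓕 : ℕ → ℕ → MeasurableSpace Ω) : Prop where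
  le : ∀ i j, 𝓕 i j ≤ m0
  mono_left : ∀ i j, 𝓕 i j ≤ 𝓕 (i + 1) j
  mono_right : ∀ i j, 𝓕 i j ≤ 𝓕 i (j + 1)
  f4 : ∀ i j k l : ℕ, ∀ f : Ω → ℝ, Integrable f μ →
    μ[μ[f|𝓕 k l]|𝓕 i j] =ᵐ[μ] μ[f|𝓕 (min i k) (min j l)]

/-- One-parameter martingale difference `Δ^{(1)}_i` with respect to `(ℱ_{i,∞})_i`:
`Δ^{(1)}_0 = 𝔼_{0,∞}` and `Δ^{(1)}_{i+1} = 𝔼_{i+1,∞} - 𝔼_{i,∞}`. -/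
noncomputable def d1 {Ω : Type*} [MeasurableSpace Ω] (μ : Measure Ω)
    (𝓕 : ℕ → ℕ → MeasurableSpace Ω) : ℕ → (Ω → ℝ) → Ω → ℝ
  | 0, f => μ[f|rowSup 𝓕 0]
  | (i + 1), f => μ[f|rowSup 𝓕 (i + 1)] - μ[f|rowSup 𝓕 i]

/-- One-parameter martingale difference `Δ^{(2)}_j` with respect to `(ℱ_{∞,j})_j`. -/
noncomputable def d2 {Ω : Type*} [MeasurableSpace Ω] (μ : Measure Ω)
    (𝓕 : ℕ → ℕ → MeasurableSpace Ω) : ℕ → (Ω → ℝ) → Ω → ℝ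
  | 0, f => μ[f|colSup 𝓕 0]
  | (j + 1), f => μ[f|colSup 𝓕 (j + 1)] - μ[f|colSup 𝓕 j]

/-- The rectangular martingale difference `Δ_{i,j} = Δ^{(1)}_i Δ^{(2)}_j`. -/
noncomputable def dd {Ω : Type*} [MeasurableSpace Ω] (μ : Measure Ω)
    (𝓕 : ℕ → ℕ → MeasurableSpace Ω) (i j : ℕ) (f : Ω → ℝ) : Ω → ℝ :=
  d1 μ 𝓕 i (d2 μ 𝓕 j f)


/-!
Under (F4), `𝔼_{∞,j} 𝔼_{i,∞} = 𝔼_{i,j}`: both sides are identified as L¹ limits of eventually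
constant sequences, via Lévy's upward theorem along a row and along a column of the filtration.
Hence the partial sums `Σ_{i ≤ n} 𝔼_{∞,m}(Δ^{(1)}_i C)` telescope to `𝔼_{n,m} C`, and the
maximal inequality is the triangle inequality for these finite sums.
-/

open Filter Topology

section General

variable {Ω E : Type*} [m0 : MeasurableSpace Ω] {μ : Measure Ω}

theorem ae_eq_of_tendsto_eLpNorm_of_eventually_ae_eq [NormedAddCommGroup E] {p : ℝ≥0∞}
    {u : ℕ → Ω → E} {f g : Ω → E} (hf : AEStronglyMeasurable f μ)
    (hg : AEStronglyMeasurable g μ) (hp : p ≠ 0)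
    (hu : Tendsto (fun n => eLpNorm (u n - f) p μ) atTop (𝓝 0))
    (hev : ∀ᶠ n in atTop, u n =ᵐ[μ] g) : f =ᵐ[μ] g := by
  have hconst : Tendsto (fun _ : ℕ => eLpNorm (g - f) p μ) atTop (𝓝 0) :=
    hu.congr' (hev.mono fun n hn => eLpNorm_congr_ae (hn.sub EventuallyEq.rfl))
  have hzero : g - f =ᵐ[μ] 0 :=
    (eLpNorm_eq_zero_iff (hg.sub hf) hp).1 (tendsto_const_nhds_iff.1 hconst)
  exact ((sub_ae_eq_zero _ _).1 hzero).symm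

theorem tendsto_eLpNorm_condExp_condExp_sub [IsFiniteMeasure μ] {ℱ : Filtration ℕ m0}
    {g : Ω → ℝ} (hg : Integrable g μ) (hgm : StronglyMeasurable[⨆ n, ℱ n] g)
    (m : MeasurableSpace Ω) :
    Tendsto (fun n => eLpNorm (μ[μ[g|ℱ n]|m] - μ[g|m]) 1 μ) atTop (𝓝 0) := by
  refine tendsto_of_tendsto_of_tendsto_of_le_of_le tendsto_const_nhds
    (hg.tendsto_eLpNorm_condExp hgm) (fun _ => zero_le) fun n => ?_
  calc eLpNorm (μ[μ[g|ℱ n]|m] - μ[g|m]) 1 μ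
      = eLpNorm (μ[μ[g|ℱ n] - g|m]) 1 μ :=
        eLpNorm_congr_ae (condExp_sub integrable_condExp hg m).symm
    _ ≤ eLpNorm (μ[g|ℱ n] - g) 1 μ := eLpNorm_condExp_le_eLpNorm _ le_rfl

theorem enorm_sum_range_le_tsum_iSup_enorm [NormedAddCommGroup E] (a : ℕ → ℕ → E) (n m : ℕ) :
    ‖∑ i ∈ Finset.range n, a i m‖ₑ ≤ ∑' i, ⨆ j, ‖a i j‖ₑ :=
  calc ‖∑ i ∈ Finset.range n, a i m‖ₑ
      ≤ ∑ i ∈ Finset.range n, ‖a i m‖ₑ := enorm_sum_le _ _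
    _ ≤ ∑ i ∈ Finset.range n, ⨆ j, ‖a i j‖ₑ :=
        Finset.sum_le_sum fun i _ => le_iSup (fun j => ‖a i j‖ₑ) m
    _ ≤ ∑' i, ⨆ j, ‖a i j‖ₑ := ENNReal.sum_le_tsum _

end General

namespace IsF4Filtration

variable {Ω : Type*} [m0 : MeasurableSpace Ω] {μ : Measure Ω} {𝓕 : ℕ → ℕ → MeasurableSpace Ω}

def rowFiltration (hF4 : IsF4Filtration μ 𝓕) (i : ℕ) : Filtration ℕ m0 where
  seq j := 𝓕 i j
  mono' := monotone_nat_of_le_succ fun j => hF4.mono_right i j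
  le' j := hF4.le i j

def colFiltration (hF4 : IsF4Filtration μ 𝓕) (j : ℕ) : Filtration ℕ m0 where
  seq i := 𝓕 i j
  mono' := monotone_nat_of_le_succ fun i => hF4.mono_left i j
  le' i := hF4.le i j

theorem rowSup_le (hF4 : IsF4Filtration μ 𝓕) (i : ℕ) : rowSup 𝓕 i ≤ m0 := iSup_le (hF4.le i)

theorem colSup_le (hF4 : IsF4Filtration μ 𝓕) (j : ℕ) : colSup 𝓕 j ≤ m0 :=
  iSup_le fun i => hF4.le i j

variable [IsFiniteMeasure μ] (hF4 : IsF4Filtration μ 𝓕) {C : Ω → ℝ}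
include hF4

theorem condExp_condExp_rowSup (hC : Integrable C μ) {i n : ℕ} (hin : i ≤ n) (m : ℕ) :
    μ[μ[C|rowSup 𝓕 i]|𝓕 n m] =ᵐ[μ] μ[C|𝓕 i m] := by
  refine ae_eq_of_tendsto_eLpNorm_of_eventually_ae_eq
    (u := fun j => μ[μ[μ[C|rowSup 𝓕 i]|𝓕 i j]|𝓕 n m]) integrable_condExp.aestronglyMeasurable
    integrable_condExp.aestronglyMeasurable one_ne_zero
    (tendsto_eLpNorm_condExp_condExp_sub (ℱ := hF4.rowFiltration i) integrable_condExp
      stronglyMeasurable_condExp _) (eventually_atTop.2 ⟨m, fun j hmj => ?_⟩)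
  have hrow : μ[μ[C|rowSup 𝓕 i]|𝓕 i j] =ᵐ[μ] μ[C|𝓕 i j] :=
    condExp_condExp_of_le (le_iSup (𝓕 i) j) (hF4.rowSup_le i)
  have hf4 := hF4.f4 n m i j C hC
  rw [min_eq_right hin, min_eq_left hmj] at hf4
  exact (condExp_congr_ae hrow).trans hf4

theorem condExp_colSup_condExp_rowSup (hC : Integrable C μ) (i m : ℕ) :
    μ[μ[C|rowSup 𝓕 i]|colSup 𝓕 m] =ᵐ[μ] μ[C|𝓕 i m] := by
  refine ae_eq_of_tendsto_eLpNorm_of_eventually_ae_eq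
    integrable_condExp.aestronglyMeasurable
    integrable_condExp.aestronglyMeasurable one_ne_zero
    (integrable_condExp.tendsto_eLpNorm_condExp (ℱ := hF4.colFiltration m)
      stronglyMeasurable_condExp) (eventually_atTop.2 ⟨i, fun n hin => ?_⟩)
  have hcol : μ[μ[μ[C|rowSup 𝓕 i]|colSup 𝓕 m]|𝓕 n m] =ᵐ[μ] μ[μ[C|rowSup 𝓕 i]|𝓕 n m] :=
    condExp_condExp_of_le (le_iSup (fun k => 𝓕 k m) n) (hF4.colSup_le m)
  exact hcol.trans (hF4.condExp_condExp_rowSup hC hin m)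

theorem condExp_colSup_d1_succ (hC : Integrable C μ) (i m : ℕ) :
    μ[d1 μ 𝓕 (i + 1) C|colSup 𝓕 m] =ᵐ[μ] μ[C|𝓕 (i + 1) m] - μ[C|𝓕 i m] :=
  (condExp_sub integrable_condExp integrable_condExp _).trans
    ((hF4.condExp_colSup_condExp_rowSup hC (i + 1) m).sub
      (hF4.condExp_colSup_condExp_rowSup hC i m))

theorem sum_condExp_colSup_d1 (hC : Integrable C μ) (n m : ℕ) :
    (fun ω => ∑ i ∈ Finset.range (n + 1), (μ[d1 μ 𝓕 i C|colSup 𝓕 m]) ω) =ᵐ[μ] μ[C|𝓕 n m] := by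
  induction n with
  | zero => simpa [d1] using hF4.condExp_colSup_condExp_rowSup hC 0 m
  | succ n ih =>
    filter_upwards [ih, hF4.condExp_colSup_d1_succ hC n m] with ω hsum hstep
    rw [Finset.sum_range_succ, hsum, hstep, Pi.sub_apply, add_sub_cancel]

end IsF4Filtration

theorem sum_sup_ge_maximal_general {Ω : Type*} [m0 : MeasurableSpace Ω]
    (μ : Measure Ω) [IsProbabilityMeasure μ] (𝓕 : ℕ → ℕ → MeasurableSpace Ω)
    (hF4 : IsF4Filtration μ 𝓕)
    (C : Ω → ℝ) (hC : Integrable C μ) :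
    ∫⁻ ω, ⨆ n, ⨆ m, (‖(μ[C|𝓕 n m]) ω‖₊ : ℝ≥0∞) ∂μ ≤
      ∫⁻ ω, ∑' i : ℕ, ⨆ j, (‖(μ[d1 μ 𝓕 i C|colSup 𝓕 j]) ω‖₊ : ℝ≥0∞) ∂μ := by
  refine lintegral_mono_ae ?_
  filter_upwards [ae_all_iff.2 fun n => ae_all_iff.2 fun m =>
    hF4.sum_condExp_colSup_d1 hC n m] with ω htelescope
  refine iSup₂_le fun n m => ?_
  rw [← htelescope n m]
  exact enorm_sum_range_le_tsum_iSup_enorm (fun i j => (μ[d1 μ 𝓕 i C|colSup 𝓕 j]) ω) (n + 1) m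

/-- For an (F4) two-parameter filtration and `C ∈ L¹(ℱ_{∞,∞})`,
`𝔼[Σ_i sup_j |𝔼_{∞,j}(Δ^{(1)}_i C)|] ≥ 𝔼[sup_{i,j} |𝔼_{i,j} C|]`. -/
theorem sum_sup_ge_maximal {Ω : Type*} [m0 : MeasurableSpace Ω]
    (μ : Measure Ω) [IsProbabilityMeasure μ] (𝓕 : ℕ → ℕ → MeasurableSpace Ω)
    (hF4 : IsF4Filtration μ 𝓕)
    (C : Ω → ℝ) (hC : Integrable C μ) (hCm : Measurable[(⨆ i, ⨆ j, 𝓕 i j)] C) :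
    ∫⁻ ω, ⨆ n, ⨆ m, (‖(μ[C|𝓕 n m]) ω‖₊ : ℝ≥0∞) ∂μ ≤
      ∫⁻ ω, ∑' i : ℕ, ⨆ j, (‖(μ[d1 μ 𝓕 i C|colSup 𝓕 j]) ω‖₊ : ℝ≥0∞) ∂μ :=
  sum_sup_ge_maximal_general (m0 := m0) μ 𝓕 hF4 C hC
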